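/- Let n ≥ 1, p ≥ 2 and let M be the n×n matrix of the chain with diagonal (-1, -2, ..., -2, -(p+1)) and off-diagonal entries M_{i,i+1} = M_{i+1,i} = -1. Then the first row of M⁻¹ has j-th entry (-1)^j ((n-j)p + 1)/p, and the last row has j-th entry (-1)^{n-j+1}/p. -/

import Mathlib

/-! The inverse is explicit: `M⁻¹ i j = (-1)^(i+j+1) ((n-1-max i j) p + 1) / p`
(0-based indices). Since `M` is tridiagonal, `M * M⁻¹ = 1` reduces to three-term identities
among these entries for the first, the interior and the last rows. Along a column the entries
alternate in sign with absolute values affine in `max i j`, so the combinations vanish except on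
the diagonal, where the kink of `max` contributes exactly `1`; in the last row the weight `p + 1`
balances the last two absolute values `(p + 1) / p` and `1 / p`. -/

def IsTridiagonal {R : Type*} [Zero R] {n : ℕ} (M : Matrix (Fin n) (Fin n) R) : Prop :=
  ∀ i j : Fin n, (i : ℕ) ≠ j → (i : ℕ) + 1 ≠ j → (j : ℕ) + 1 ≠ i → M i j = 0

namespace IsTridiagonal

variable {R : Type*} [NonUnitalNonAssocSemiring R] {n : ℕ} {M : Matrix (Fin n) (Fin n) R}

theorem mul_apply_eq_sum (hM : IsTridiagonal M) (N : Matrix (Fin n) (Fin n) R) (i j : Fin n)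
    {S : Finset (Fin n)}
    (hS : ∀ k : Fin n, (k : ℕ) + 1 = i ∨ (k : ℕ) = i ∨ (i : ℕ) + 1 = k → k ∈ S) :
    (M * N) i j = ∑ k ∈ S, M i k * N k j := by
  rw [Matrix.mul_apply]
  refine (Finset.sum_subset (Finset.subset_univ S) fun k _ hk => ?_).symm
  have hfar := mt (hS k) hk
  rw [hM i k (by omega) (by omega) (by omega), zero_mul]

theorem mul_apply_zero (hM : IsTridiagonal M) (N : Matrix (Fin n) (Fin n) R) (hn : 1 < n)
    (j : Fin n) :
    (M * N) ⟨0, by omega⟩ j =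
      M ⟨0, by omega⟩ ⟨0, by omega⟩ * N ⟨0, by omega⟩ j +
        M ⟨0, by omega⟩ ⟨1, hn⟩ * N ⟨1, hn⟩ j := by
  rw [hM.mul_apply_eq_sum N _ j (S := {⟨0, by omega⟩, ⟨1, hn⟩}) fun k hk => by
      simp only [Finset.mem_insert, Finset.mem_singleton, Fin.ext_iff] at hk ⊢; omega,
    Finset.sum_pair (by simp [Fin.ext_iff])]

theorem mul_apply_succ (hM : IsTridiagonal M) (N : Matrix (Fin n) (Fin n) R) {m : ℕ}
    (hm : m + 2 < n) (j : Fin n) :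
    (M * N) ⟨m + 1, by omega⟩ j =
      M ⟨m + 1, by omega⟩ ⟨m, by omega⟩ * N ⟨m, by omega⟩ j +
        M ⟨m + 1, by omega⟩ ⟨m + 1, by omega⟩ * N ⟨m + 1, by omega⟩ j +
        M ⟨m + 1, by omega⟩ ⟨m + 2, hm⟩ * N ⟨m + 2, hm⟩ j := by
  rw [hM.mul_apply_eq_sum N _ j (S := {⟨m, by omega⟩, ⟨m + 1, by omega⟩, ⟨m + 2, hm⟩})
      fun k hk => by
        simp only [Finset.mem_insert, Finset.mem_singleton, Fin.ext_iff] at hk ⊢; omega,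
    Finset.sum_insert (by simp [Fin.ext_iff]), Finset.sum_pair (by simp [Fin.ext_iff]), add_assoc]

theorem mul_apply_last {m : ℕ} {M : Matrix (Fin (m + 2)) (Fin (m + 2)) R} (hM : IsTridiagonal M)
    (N : Matrix (Fin (m + 2)) (Fin (m + 2)) R) (j : Fin (m + 2)) :
    (M * N) ⟨m + 1, by omega⟩ j =
      M ⟨m + 1, by omega⟩ ⟨m, by omega⟩ * N ⟨m, by omega⟩ j +
        M ⟨m + 1, by omega⟩ ⟨m + 1, by omega⟩ * N ⟨m + 1, by omega⟩ j := by
  rw [hM.mul_apply_eq_sum N _ j (S := {⟨m, by omega⟩, ⟨m + 1, by omega⟩}) fun k hk => by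
      simp only [Finset.mem_insert, Finset.mem_singleton, Fin.ext_iff] at hk ⊢; omega,
    Finset.sum_pair (by simp [Fin.ext_iff])]

end IsTridiagonal

def chainInvEntry (n p i j : ℕ) : ℚ :=
  (-1) ^ (i + j + 1) * (((n : ℚ) - 1 - (max i j : ℕ)) * p + 1) / p

section chainInvEntry

variable {n p : ℕ} (hp : (p : ℚ) ≠ 0)
include hp

theorem chainInvEntry_first_row (j : ℕ) :
    -chainInvEntry n p 0 j - chainInvEntry n p 1 j = if 0 = j then 1 else 0 := by
  rcases Nat.eq_zero_or_pos j with rfl | hj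
  · rw [if_pos rfl, chainInvEntry, chainInvEntry, max_self, Nat.max_zero]
    push_cast
    field_simp
    ring
  · rw [if_neg hj.ne, chainInvEntry, chainInvEntry, Nat.zero_max, max_eq_right hj]
    ring

theorem chainInvEntry_interior_row (m j : ℕ) :
    -chainInvEntry n p m j - 2 * chainInvEntry n p (m + 1) j - chainInvEntry n p (m + 2) j =
      if m + 1 = j then 1 else 0 := by
  simp only [chainInvEntry]
  rcases lt_trichotomy j (m + 1) with hj | rfl | hj
  · rw [if_neg hj.ne', max_eq_left (by omega), max_eq_left (by omega), max_eq_left (by omega)]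
    push_cast
    ring
  · rw [if_pos rfl, max_eq_right (by omega), max_self, max_eq_left (by omega),
      show m + (m + 1) + 1 = 2 * (m + 1) by ring,
      show m + 1 + (m + 1) + 1 = 2 * (m + 1) + 1 by ring,
      show m + 2 + (m + 1) + 1 = 2 * (m + 1) + 2 by ring]
    simp only [pow_add, pow_mul, neg_one_sq, one_pow]
    push_cast
    field_simp
    ring
  · rw [if_neg hj.ne, max_eq_right (by omega), max_eq_right (by omega), max_eq_right (by omega)]
    ring

theorem chainInvEntry_last_row {m j : ℕ} (hj : j ≤ m + 1) :
    -chainInvEntry (m + 2) p m j - (p + 1) * chainInvEntry (m + 2) p (m + 1) j =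
      if m + 1 = j then 1 else 0 := by
  simp only [chainInvEntry]
  rcases hj.lt_or_eq with hj | rfl
  · rw [if_neg hj.ne', max_eq_left (by omega), max_eq_left (by omega)]
    push_cast
    field_simp
    ring
  · rw [if_pos rfl, max_eq_right (by omega), max_self,
      show m + (m + 1) + 1 = 2 * (m + 1) by ring,
      show m + 1 + (m + 1) + 1 = 2 * (m + 1) + 1 by ring]
    simp only [pow_add, pow_mul, neg_one_sq, one_pow]
    push_cast
    field_simp
    ring

end chainInvEntry

def chainInv (n p : ℕ) : Matrix (Fin n) (Fin n) ℚ :=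
  Matrix.of fun i j => chainInvEntry n p i j

theorem mul_chainInv_eq_one {n p : ℕ} (hn : 2 ≤ n) (hp : (p : ℚ) ≠ 0)
    {M : Matrix (Fin n) (Fin n) ℚ}
    (hfirst : M ⟨0, by omega⟩ ⟨0, by omega⟩ = -1)
    (hdiag : ∀ i : Fin n, 1 ≤ (i : ℕ) → (i : ℕ) ≤ n - 2 → M i i = -2)
    (hlast : M ⟨n - 1, by omega⟩ ⟨n - 1, by omega⟩ = -((p : ℚ) + 1))
    (hoff : ∀ i j : Fin n, (i : ℕ) + 1 = (j : ℕ) → M i j = -1 ∧ M j i = -1)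
    (hM : IsTridiagonal M) :
    M * chainInv n p = 1 := by
  ext ⟨i, hi⟩ ⟨j, hj⟩
  simp only [Matrix.one_apply, Fin.mk.injEq]
  rcases i with _ | m
  · rw [hM.mul_apply_zero _ hn, hfirst, (hoff _ _ rfl).1, ← chainInvEntry_first_row hp j]
    simp only [chainInv, Matrix.of_apply]
    ring
  · rcases (show m + 2 < n ∨ m + 2 = n by omega) with hm | rfl
    · rw [hM.mul_apply_succ _ hm, (hoff ⟨m, by omega⟩ _ rfl).2, (hoff _ ⟨m + 2, hm⟩ rfl).1,
        hdiag _ (by simp) (by simp; omega), ← chainInvEntry_interior_row hp m j]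
      simp only [chainInv, Matrix.of_apply]
      ring
    · rw [hM.mul_apply_last, (hoff ⟨m, by omega⟩ _ rfl).2,
        show M ⟨m + 1, hi⟩ ⟨m + 1, hi⟩ = _ from hlast,
        ← chainInvEntry_last_row hp (by omega : j ≤ m + 1)]
      simp only [chainInv, Matrix.of_apply]
      ring

/-- For the n×n chain matrix with diagonal (-1, -2, ..., -2, -(p+1)) and
off-diagonal neighbouring entries -1, the first row of M⁻¹ has j-th entry
(-1)^j((n-j)p+1)/p (1-based j) and the last row has j-th entry (-1)^{n-j+1}/p. -/
theorem stmt8 (n p : ℕ) (hn : 1 ≤ n) (hp : 2 ≤ p) (M : Matrix (Fin n) (Fin n) ℚ)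
    (hfirst : M ⟨0, by omega⟩ ⟨0, by omega⟩ = -1)
    (hdiag : ∀ i : Fin n, 1 ≤ (i : ℕ) → (i : ℕ) ≤ n - 2 → M i i = -2)
    (hlast : M ⟨n - 1, by omega⟩ ⟨n - 1, by omega⟩ = -((p : ℚ) + 1))
    (hoff : ∀ i j : Fin n, (i : ℕ) + 1 = (j : ℕ) → M i j = -1 ∧ M j i = -1)
    (hzero : ∀ i j : Fin n, (i : ℕ) ≠ (j : ℕ) → (i : ℕ) + 1 ≠ (j : ℕ) →
      (j : ℕ) + 1 ≠ (i : ℕ) → M i j = 0) :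
    ∀ j : Fin n,
      M⁻¹ ⟨0, by omega⟩ j =
        (-1) ^ ((j : ℕ) + 1) * (((n : ℚ) - 1 - (j : ℕ)) * p + 1) / p ∧
      M⁻¹ ⟨n - 1, by omega⟩ j = (-1) ^ (n - (j : ℕ)) / p := by
  have hp0 : (p : ℚ) ≠ 0 := by exact_mod_cast (by omega : p ≠ 0)
  have hn2 : 2 ≤ n := by
    by_contra h
    obtain rfl : n = 1 := by omega
    have : (-1 : ℚ) = -(p + 1) := hfirst.symm.trans hlast
    exact hp0 (by linarith)
  rw [Matrix.inv_eq_right_inv (mul_chainInv_eq_one hn2 hp0 hfirst hdiag hlast hoff hzero)]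
  rintro ⟨j, hj⟩
  simp only [chainInv, Matrix.of_apply, chainInvEntry, Nat.zero_max,
    max_eq_left (by omega : j ≤ n - 1)]
  refine ⟨by ring, ?_⟩
  rw [Nat.cast_sub hn, show n - 1 + j + 1 = n - j + 2 * j by omega, pow_add, pow_mul]
  push_cast
  ring
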